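/- arXiv:2005.09229 — 2 statements merged into one kernel-verified Lean document; each statement's English description precedes it below -/
import Mathlib

section
/- With J as defined in the context, fix an n×k matrix V' with strictly positive entries and assume that for every index pair (i,j) the quantities (Δ₁)_{ij} = (B₁⁺ + B₂⁺ + V'(A₁⁻ + A₂⁻) + λ₂(W_P + W_Q)V')_{ij} and (Δ₂)_{ij} = (B₁⁻ + B₂⁻ + V'(A₁⁺ + A₂⁺) + λ₂(D_P + D_Q)V')_{ij} are strictly positive. Then the matrix V* with entries v*_{ij} = v'_{ij} · sqrt( (Δ₁)_{ij} / (Δ₂)_{ij} ) is the global minimizer of V ↦ J(V, V') over n×k matrices with strictly positive entries: it satisfies the first-order condition ∂J(V,V')/∂v_{ij} = 0 at V = V*, and J(V*, V') ≤ J(V, V') for every n×k matrix V with strictly positive entries. -/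
open Matrix BigOperators Real

noncomputable section

/-- Positive part of a matrix: M⁺ᵢⱼ = (|Mᵢⱼ| + Mᵢⱼ)/2. -/
def mpos {α β : Type*} (M : Matrix α β ℝ) : Matrix α β ℝ :=
  Matrix.of fun i j => (|M i j| + M i j) / 2

/-- Negative part of a matrix: M⁻ᵢⱼ = (|Mᵢⱼ| − Mᵢⱼ)/2. -/
def mneg {α β : Type*} (M : Matrix α β ℝ) : Matrix α β ℝ :=
  Matrix.of fun i j => (|M i j| - M i j) / 2

/-- Degree matrix of a weight matrix: diagonal with Dᵢᵢ = Σⱼ Wᵢⱼ. -/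
def dmat {n : ℕ} (W : Matrix (Fin n) (Fin n) ℝ) : Matrix (Fin n) (Fin n) ℝ :=
  Matrix.diagonal (fun i => ∑ j, W i j)

/-- The objective F(V) of the V-subproblem (eq. (17) in the paper). -/
def Fobj {n k : ℕ} (B₁ B₂ : Matrix (Fin n) (Fin k) ℝ)
    (A₁ A₂ : Matrix (Fin k) (Fin k) ℝ)
    (WP WQ : Matrix (Fin n) (Fin n) ℝ) (lam : ℝ)
    (V : Matrix (Fin n) (Fin k) ℝ) : ℝ :=
  -2 * Matrix.trace (Vᵀ * mpos B₁) + 2 * Matrix.trace (Vᵀ * mneg B₁)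
    + Matrix.trace (V * mpos A₁ * Vᵀ) - Matrix.trace (V * mneg A₁ * Vᵀ)
    - 2 * Matrix.trace (Vᵀ * mpos B₂) + 2 * Matrix.trace (Vᵀ * mneg B₂)
    + Matrix.trace (V * mpos A₂ * Vᵀ) - Matrix.trace (V * mneg A₂ * Vᵀ)
    + lam * Matrix.trace (Vᵀ * dmat WP * V) - lam * Matrix.trace (Vᵀ * WP * V)
    + lam * Matrix.trace (Vᵀ * dmat WQ * V) - lam * Matrix.trace (Vᵀ * WQ * V)

/-- The auxiliary function J(V, V') of Lemma 3 in the paper. -/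
def Jaux {n k : ℕ} (B₁ B₂ : Matrix (Fin n) (Fin k) ℝ)
    (A₁ A₂ : Matrix (Fin k) (Fin k) ℝ)
    (WP WQ : Matrix (Fin n) (Fin n) ℝ) (lam : ℝ)
    (V V' : Matrix (Fin n) (Fin k) ℝ) : ℝ :=
  -2 * ∑ i, ∑ s, mpos B₁ i s * V' i s * (1 + Real.log (V i s / V' i s))
    + 2 * ∑ i, ∑ s, mneg B₁ i s * ((V i s) ^ 2 + (V' i s) ^ 2) / (2 * V' i s)
    + ∑ i, ∑ s, (V' * mpos A₁) i s * (V i s) ^ 2 / V' i s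
    - ∑ i, ∑ s, ∑ l, mneg A₁ s l * V' i s * V' i l *
        (1 + Real.log (V i s * V i l / (V' i s * V' i l)))
    - 2 * ∑ i, ∑ s, mpos B₂ i s * V' i s * (1 + Real.log (V i s / V' i s))
    + 2 * ∑ i, ∑ s, mneg B₂ i s * ((V i s) ^ 2 + (V' i s) ^ 2) / (2 * V' i s)
    + ∑ i, ∑ s, (V' * mpos A₂) i s * (V i s) ^ 2 / V' i s
    - ∑ i, ∑ s, ∑ l, mneg A₂ s l * V' i s * V' i l *
        (1 + Real.log (V i s * V i l / (V' i s * V' i l)))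
    + lam * ∑ i, ∑ s, (dmat WP * V') i s * (V i s) ^ 2 / V' i s
    - lam * ∑ a, ∑ c, ∑ j, WP a c * V' a j * V' c j *
        (1 + Real.log (V a j * V c j / (V' a j * V' c j)))
    + lam * ∑ i, ∑ s, (dmat WQ * V') i s * (V i s) ^ 2 / V' i s
    - lam * ∑ a, ∑ c, ∑ j, WQ a c * V' a j * V' c j *
        (1 + Real.log (V a j * V c j / (V' a j * V' c j)))

/-!
For fixed `V'`, every summand of `J(V, V')` is, up to a term not depending on `V`, a multiple of
`v_is² / v'_is` or of `v'_is log v_is`; the symmetry of `A₁⁻, A₂⁻, W_P, W_Q` merges the two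
logarithms in each `log (v_is v_il / …)` term. Collecting coefficients gives
`J(V, V') = Σ_is ((Δ₂)_is / v'_is · v_is² − 2 (Δ₁)_is v'_is log v_is) + K(V')`,
so `J` separates into one-variable functions `a v² − b log v` with `a, b > 0`. Each has its only
critical point at `w = √(b / 2a) = v*_is`, and `log v − log w ≤ v / w − 1` shows it is minimal there.
-/

lemma mneg_isSymm {κ : Type*} {A : Matrix κ κ ℝ} (hA : A.IsSymm) : (mneg A).IsSymm := by
  ext i j
  simp [mneg, hA.apply]

section Forms

variable {ι κ : Type*} [Fintype ι] [Fintype κ]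

def quadForm (C V' V : Matrix ι κ ℝ) : ℝ :=
  ∑ i, ∑ s, C i s * V i s ^ 2 / V' i s

def logForm (C V' V : Matrix ι κ ℝ) : ℝ :=
  ∑ i, ∑ s, C i s * V' i s * Real.log (V i s)

variable (V' V : Matrix ι κ ℝ)

lemma quadForm_add (C D : Matrix ι κ ℝ) :
    quadForm (C + D) V' V = quadForm C V' V + quadForm D V' V := by
  simp only [quadForm, Matrix.add_apply, add_mul, add_div, Finset.sum_add_distrib]

lemma quadForm_smul (c : ℝ) (C : Matrix ι κ ℝ) :
    quadForm (c • C) V' V = c * quadForm C V' V := by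
  simp only [quadForm, Matrix.smul_apply, smul_eq_mul, Finset.mul_sum, mul_assoc, mul_div_assoc]

lemma logForm_add (C D : Matrix ι κ ℝ) :
    logForm (C + D) V' V = logForm C V' V + logForm D V' V := by
  simp only [logForm, Matrix.add_apply, add_mul, Finset.sum_add_distrib]

lemma logForm_smul (c : ℝ) (C : Matrix ι κ ℝ) :
    logForm (c • C) V' V = c * logForm C V' V := by
  simp only [logForm, Matrix.smul_apply, smul_eq_mul, Finset.mul_sum, mul_assoc]

lemma logForm_transpose (C : Matrix ι κ ℝ) : logForm Cᵀ V'ᵀ Vᵀ = logForm C V' V := by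
  simp only [logForm, transpose_apply]
  exact Finset.sum_comm

end Forms

lemma sum_sum_mul_one_add_log_mul_div_mul {τ : Type*} [Fintype τ] {ω : Matrix τ τ ℝ}
    (hω : ω.IsSymm) {x x' : τ → ℝ} (hx : ∀ s, 0 < x s) (hx' : ∀ s, 0 < x' s) :
    ∑ s, ∑ l, ω s l * x' s * x' l * (1 + Real.log (x s * x l / (x' s * x' l)))
      = 2 * ∑ s, (ω *ᵥ x') s * x' s * Real.log (x s)
        + ∑ s, ∑ l, ω s l * x' s * x' l * (1 - Real.log (x' s) - Real.log (x' l)) := by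
  have hsplit : ∀ s l, ω s l * x' s * x' l * (1 + Real.log (x s * x l / (x' s * x' l)))
      = ω s l * x' s * x' l * Real.log (x s) + ω s l * x' s * x' l * Real.log (x l)
        + ω s l * x' s * x' l * (1 - Real.log (x' s) - Real.log (x' l)) := by
    intro s l
    rw [Real.log_div (mul_pos (hx s) (hx l)).ne' (mul_pos (hx' s) (hx' l)).ne',
      Real.log_mul (hx s).ne' (hx l).ne', Real.log_mul (hx' s).ne' (hx' l).ne']
    ring
  have hswap : ∑ s, ∑ l, ω s l * x' s * x' l * Real.log (x l)
      = ∑ s, ∑ l, ω s l * x' s * x' l * Real.log (x s) := by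
    rw [Finset.sum_comm]
    refine Finset.sum_congr rfl fun s _ => Finset.sum_congr rfl fun l _ => ?_
    rw [hω.apply]
    ring
  have hcollect : ∑ s, ∑ l, ω s l * x' s * x' l * Real.log (x s)
      = ∑ s, (ω *ᵥ x') s * x' s * Real.log (x s) := by
    refine Finset.sum_congr rfl fun s _ => ?_
    simp only [mulVec, dotProduct, Finset.sum_mul]
    exact Finset.sum_congr rfl fun l _ => by ring
  simp only [hsplit, Finset.sum_add_distrib]
  rw [hswap, hcollect]
  ring

section Terms

variable {ι κ : Type*} [Fintype ι] [Fintype κ] {V' : Matrix ι κ ℝ}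

lemma exists_sum_mul_one_add_log_div_eq (hV' : ∀ i s, 0 < V' i s) (P : Matrix ι κ ℝ) :
    ∃ c, ∀ V : Matrix ι κ ℝ, (∀ i s, 0 < V i s) →
      ∑ i, ∑ s, P i s * V' i s * (1 + Real.log (V i s / V' i s)) = logForm P V' V + c := by
  refine ⟨∑ i, ∑ s, P i s * V' i s * (1 - Real.log (V' i s)), fun V hV => ?_⟩
  simp only [logForm, ← Finset.sum_add_distrib]
  refine Finset.sum_congr rfl fun i _ => Finset.sum_congr rfl fun s _ => ?_
  rw [Real.log_div (hV i s).ne' (hV' i s).ne']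
  ring

lemma exists_two_mul_sum_sq_add_sq_div_eq (N : Matrix ι κ ℝ) :
    ∃ c, ∀ V : Matrix ι κ ℝ,
      2 * ∑ i, ∑ s, N i s * (V i s ^ 2 + V' i s ^ 2) / (2 * V' i s) = quadForm N V' V + c := by
  refine ⟨∑ i, ∑ s, N i s * V' i s ^ 2 / V' i s, fun V => ?_⟩
  simp only [quadForm, Finset.mul_sum, ← Finset.sum_add_distrib]
  refine Finset.sum_congr rfl fun i _ => Finset.sum_congr rfl fun s _ => ?_
  ring

lemma exists_sum_row_pair_log_eq (hV' : ∀ i s, 0 < V' i s) {M : Matrix κ κ ℝ} (hM : M.IsSymm) :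
    ∃ c, ∀ V : Matrix ι κ ℝ, (∀ i s, 0 < V i s) →
      ∑ i, ∑ s, ∑ l, M s l * V' i s * V' i l * (1 + Real.log (V i s * V i l / (V' i s * V' i l)))
        = 2 * logForm (V' * M) V' V + c := by
  refine ⟨∑ i, ∑ s, ∑ l, M s l * V' i s * V' i l * (1 - Real.log (V' i s) - Real.log (V' i l)),
    fun V hV => ?_⟩
  have hrow : ∀ i, V' i ᵥ* M = M *ᵥ V' i := fun i => by rw [← vecMul_transpose, hM.eq]
  simp only [logForm, Finset.mul_sum, ← Finset.sum_add_distrib]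
  refine Finset.sum_congr rfl fun i _ => ?_
  rw [sum_sum_mul_one_add_log_mul_div_mul hM (hV i) (hV' i), Finset.mul_sum,
    ← Finset.sum_add_distrib, mul_apply_eq_vecMul, hrow]

lemma exists_sum_col_pair_log_eq (hV' : ∀ i s, 0 < V' i s) {W : Matrix ι ι ℝ} (hW : W.IsSymm) :
    ∃ c, ∀ V : Matrix ι κ ℝ, (∀ i s, 0 < V i s) →
      ∑ a, ∑ b, ∑ j, W a b * V' a j * V' b j * (1 + Real.log (V a j * V b j / (V' a j * V' b j)))
        = 2 * logForm (W * V') V' V + c := by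
  obtain ⟨c, hc⟩ := exists_sum_row_pair_log_eq (V' := V'ᵀ) (fun j a => hV' a j) hW
  refine ⟨c, fun V hV => ?_⟩
  rw [← logForm_transpose, transpose_mul, hW.eq, ← hc Vᵀ fun j a => hV a j]
  simp only [transpose_apply]
  calc _ = ∑ a, ∑ j, ∑ b, W a b * V' a j * V' b j *
        (1 + Real.log (V a j * V b j / (V' a j * V' b j))) :=
        Finset.sum_congr rfl fun a _ => Finset.sum_comm
    _ = _ := Finset.sum_comm

end Terms

def quadLog (a b v : ℝ) : ℝ := a * v ^ 2 - b * Real.log v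

section QuadLog

variable {a b w : ℝ}

lemma hasDerivAt_quadLog_of_critical (hw : w ≠ 0) (hb : b = 2 * a * w ^ 2) :
    HasDerivAt (quadLog a b) 0 w := by
  refine (((hasDerivAt_pow 2 w).const_mul a).sub
    ((Real.hasDerivAt_log hw).const_mul b)).congr_deriv ?_
  rw [hb]
  field_simp
  ring

lemma quadLog_le_of_critical (ha : 0 ≤ a) (hw : 0 < w) (hb : b = 2 * a * w ^ 2) {v : ℝ}
    (hv : 0 < v) : quadLog a b w ≤ quadLog a b v := by
  have hlog : Real.log v - Real.log w ≤ v / w - 1 := by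
    rw [← Real.log_div hv.ne' hw.ne']
    exact Real.log_le_sub_one_of_pos (div_pos hv hw)
  have hlin : b * (v / w - 1) = 2 * a * w * (v - w) := by
    rw [hb]
    field_simp
  have hb0 : 0 ≤ b := hb ▸ by positivity
  unfold quadLog
  nlinarith [mul_le_mul_of_nonneg_left hlog hb0, mul_nonneg ha (sq_nonneg (v - w))]

end QuadLog

lemma quadForm_sub_two_mul_logForm {ι κ : Type*} [Fintype ι] [Fintype κ]
    (D C V' V : Matrix ι κ ℝ) :
    quadForm D V' V - 2 * logForm C V' V
      = ∑ i, ∑ s, quadLog (D i s / V' i s) (2 * C i s * V' i s) (V i s) := by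
  simp only [quadForm, logForm, quadLog, Finset.mul_sum, ← Finset.sum_sub_distrib]
  refine Finset.sum_congr rfl fun i _ => Finset.sum_congr rfl fun s _ => ?_
  ring

lemma exists_Jaux_eq_sum_quadLog {n k : ℕ} (B₁ B₂ : Matrix (Fin n) (Fin k) ℝ)
    {A₁ A₂ : Matrix (Fin k) (Fin k) ℝ} (hA₁ : A₁.IsSymm) (hA₂ : A₂.IsSymm)
    {WP WQ : Matrix (Fin n) (Fin n) ℝ} (hWP : WP.IsSymm) (hWQ : WQ.IsSymm) (lam : ℝ)
    {V' : Matrix (Fin n) (Fin k) ℝ} (hV' : ∀ i j, 0 < V' i j) :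
    ∃ K, ∀ V : Matrix (Fin n) (Fin k) ℝ, (∀ i j, 0 < V i j) →
      Jaux B₁ B₂ A₁ A₂ WP WQ lam V V'
        = quadForm (mneg B₁ + mneg B₂ + V' * (mpos A₁ + mpos A₂)
              + lam • ((dmat WP + dmat WQ) * V')) V' V
          - 2 * logForm (mpos B₁ + mpos B₂ + V' * (mneg A₁ + mneg A₂)
              + lam • ((WP + WQ) * V')) V' V + K := by
  obtain ⟨c₁, h₁⟩ := exists_sum_mul_one_add_log_div_eq hV' (mpos B₁)
  obtain ⟨c₂, h₂⟩ := exists_sum_mul_one_add_log_div_eq hV' (mpos B₂)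
  obtain ⟨c₃, h₃⟩ := exists_two_mul_sum_sq_add_sq_div_eq (V' := V') (mneg B₁)
  obtain ⟨c₄, h₄⟩ := exists_two_mul_sum_sq_add_sq_div_eq (V' := V') (mneg B₂)
  obtain ⟨c₅, h₅⟩ := exists_sum_row_pair_log_eq hV' (mneg_isSymm hA₁)
  obtain ⟨c₆, h₆⟩ := exists_sum_row_pair_log_eq hV' (mneg_isSymm hA₂)
  obtain ⟨c₇, h₇⟩ := exists_sum_col_pair_log_eq hV' hWP
  obtain ⟨c₈, h₈⟩ := exists_sum_col_pair_log_eq hV' hWQ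
  refine ⟨-2 * c₁ + c₃ - c₅ - 2 * c₂ + c₄ - c₆ - lam * c₇ - lam * c₈, fun V hV => ?_⟩
  rw [Jaux, h₁ V hV, h₂ V hV, h₃ V, h₄ V, h₅ V hV, h₆ V hV, h₇ V hV, h₈ V hV]
  simp only [Matrix.mul_add, Matrix.add_mul, smul_add, quadForm_add, quadForm_smul,
    logForm_add, logForm_smul]
  simp only [quadForm]
  ring

section UpdateEntry

variable {ι κ : Type*} [Fintype ι] [Fintype κ] [DecidableEq ι] [DecidableEq κ]

lemma sum_sum_apply_updateEntry (f : ι → κ → ℝ → ℝ) (X : Matrix ι κ ℝ) (i : ι) (j : κ) (t : ℝ) :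
    ∑ a, ∑ b, f a b (of (fun a b => if a = i ∧ b = j then t else X a b) a b)
      = f i j t + (∑ a, ∑ b, f a b (X a b) - f i j (X i j)) := by
  have h : ∀ a b, f a b (of (fun a b => if a = i ∧ b = j then t else X a b) a b)
      = f a b (X a b) + if a = i then if b = j then f i j t - f i j (X i j) else 0 else 0 := by
    intro a b
    by_cases ha : a = i <;> by_cases hb : b = j <;> simp [ha, hb]
  simp only [h, Finset.sum_add_distrib, Finset.sum_ite_irrel, Finset.sum_ite_eq', Finset.mem_univ,
    ↓reduceIte, Finset.sum_const_zero]
  ring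

lemma deriv_sum_sum_apply_updateEntry (f : ι → κ → ℝ → ℝ) (X : Matrix ι κ ℝ) (i : ι) (j : κ)
    (x : ℝ) :
    deriv (fun t => ∑ a, ∑ b, f a b (of (fun a b => if a = i ∧ b = j then t else X a b) a b)) x
      = deriv (f i j) x := by
  simp only [sum_sum_apply_updateEntry, deriv_add_const]

end UpdateEntry

theorem Jaux_global_min_general (n k : ℕ) (B₁ B₂ : Matrix (Fin n) (Fin k) ℝ)
    (A₁ A₂ : Matrix (Fin k) (Fin k) ℝ) (hA₁ : A₁.IsSymm) (hA₂ : A₂.IsSymm)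
    (WP WQ : Matrix (Fin n) (Fin n) ℝ) (hWP : WP.IsSymm) (hWQ : WQ.IsSymm)
    (lam : ℝ)
    (V' : Matrix (Fin n) (Fin k) ℝ) (hV' : ∀ i j, 0 < V' i j)
    (Δ₁ Δ₂ : Matrix (Fin n) (Fin k) ℝ)
    (hΔ₁def : Δ₁ = mpos B₁ + mpos B₂ + V' * (mneg A₁ + mneg A₂)
        + lam • ((WP + WQ) * V'))
    (hΔ₂def : Δ₂ = mneg B₁ + mneg B₂ + V' * (mpos A₁ + mpos A₂)
        + lam • ((dmat WP + dmat WQ) * V'))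
    (hΔ₁ : ∀ i j, 0 < Δ₁ i j) (hΔ₂ : ∀ i j, 0 < Δ₂ i j)
    (Vstar : Matrix (Fin n) (Fin k) ℝ)
    (hVstar : ∀ i j, Vstar i j = V' i j * Real.sqrt (Δ₁ i j / Δ₂ i j)) :
    (∀ i j,
      deriv
          (fun t : ℝ => Jaux B₁ B₂ A₁ A₂ WP WQ lam
            (Matrix.of fun a b => if a = i ∧ b = j then t else Vstar a b) V')
          (Vstar i j) = 0) ∧
    (∀ V : Matrix (Fin n) (Fin k) ℝ, (∀ i j, 0 < V i j) →
      Jaux B₁ B₂ A₁ A₂ WP WQ lam Vstar V' ≤ Jaux B₁ B₂ A₁ A₂ WP WQ lam V V') := by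
  let g (a : Fin n) (b : Fin k) : ℝ → ℝ := quadLog (Δ₂ a b / V' a b) (2 * Δ₁ a b * V' a b)
  obtain ⟨K, hK⟩ : ∃ K, ∀ V : Matrix (Fin n) (Fin k) ℝ, (∀ i j, 0 < V i j) →
      Jaux B₁ B₂ A₁ A₂ WP WQ lam V V' = ∑ a, ∑ b, g a b (V a b) + K := by
    obtain ⟨K, hK⟩ := exists_Jaux_eq_sum_quadLog B₁ B₂ hA₁ hA₂ hWP hWQ lam hV'
    rw [← hΔ₁def, ← hΔ₂def] at hK
    exact ⟨K, fun V hV => by rw [hK V hV, quadForm_sub_two_mul_logForm]⟩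
  have hpos : ∀ i j, 0 < Vstar i j := fun i j => by
    rw [hVstar]
    exact mul_pos (hV' i j) (Real.sqrt_pos.mpr (div_pos (hΔ₁ i j) (hΔ₂ i j)))
  have hcrit : ∀ i j, 2 * Δ₁ i j * V' i j = 2 * (Δ₂ i j / V' i j) * Vstar i j ^ 2 := fun i j => by
    rw [hVstar, mul_pow, Real.sq_sqrt (div_pos (hΔ₁ i j) (hΔ₂ i j)).le]
    field_simp [(hV' i j).ne', (hΔ₂ i j).ne']
  have hcoef : ∀ i j, 0 ≤ Δ₂ i j / V' i j := fun i j => (div_pos (hΔ₂ i j) (hV' i j)).le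
  refine ⟨fun i j => ?_, fun V hV => ?_⟩
  · have hloc : (fun t => Jaux B₁ B₂ A₁ A₂ WP WQ lam
          (of fun a b => if a = i ∧ b = j then t else Vstar a b) V')
        =ᶠ[nhds (Vstar i j)] fun t =>
          ∑ a, ∑ b, g a b ((of fun a b => if a = i ∧ b = j then t else Vstar a b) a b) + K := by
      filter_upwards [Ioi_mem_nhds (hpos i j)] with t ht
      refine hK _ fun a b => ?_
      simp only [of_apply]
      split_ifs
      exacts [ht, hpos a b]
    rw [hloc.deriv_eq, deriv_add_const, deriv_sum_sum_apply_updateEntry]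
    exact (hasDerivAt_quadLog_of_critical (hpos i j).ne' (hcrit i j)).deriv
  · rw [hK V hV, hK Vstar hpos]
    gcongr with i _ s _
    exact quadLog_le_of_critical (hcoef i s) (hpos i s) (hcrit i s) (hV i s)

/-- Lemma (auxiliary function, global-minimum part): the matrix
V*ᵢⱼ = v'ᵢⱼ √((Δ₁)ᵢⱼ/(Δ₂)ᵢⱼ) satisfies the first-order condition
∂J(V,V')/∂vᵢⱼ = 0 and globally minimizes V ↦ J(V, V') over entrywise
positive matrices. -/
theorem Jaux_global_min (n k : ℕ) (B₁ B₂ : Matrix (Fin n) (Fin k) ℝ)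
    (A₁ A₂ : Matrix (Fin k) (Fin k) ℝ) (hA₁ : A₁.IsSymm) (hA₂ : A₂.IsSymm)
    (WP WQ : Matrix (Fin n) (Fin n) ℝ) (hWP : WP.IsSymm) (hWQ : WQ.IsSymm)
    (hWPnn : ∀ i j, 0 ≤ WP i j) (hWQnn : ∀ i j, 0 ≤ WQ i j)
    (lam : ℝ) (hlam : 0 ≤ lam)
    (V' : Matrix (Fin n) (Fin k) ℝ) (hV' : ∀ i j, 0 < V' i j)
    (Δ₁ Δ₂ : Matrix (Fin n) (Fin k) ℝ)
    (hΔ₁def : Δ₁ = mpos B₁ + mpos B₂ + V' * (mneg A₁ + mneg A₂)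
        + lam • ((WP + WQ) * V'))
    (hΔ₂def : Δ₂ = mneg B₁ + mneg B₂ + V' * (mpos A₁ + mpos A₂)
        + lam • ((dmat WP + dmat WQ) * V'))
    (hΔ₁ : ∀ i j, 0 < Δ₁ i j) (hΔ₂ : ∀ i j, 0 < Δ₂ i j)
    (Vstar : Matrix (Fin n) (Fin k) ℝ)
    (hVstar : ∀ i j, Vstar i j = V' i j * Real.sqrt (Δ₁ i j / Δ₂ i j)) :
    (∀ i j,
      deriv
          (fun t : ℝ => Jaux B₁ B₂ A₁ A₂ WP WQ lam
            (Matrix.of fun a b => if a = i ∧ b = j then t else Vstar a b) V')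
          (Vstar i j) = 0) ∧
    (∀ V : Matrix (Fin n) (Fin k) ℝ, (∀ i j, 0 < V i j) →
      Jaux B₁ B₂ A₁ A₂ WP WQ lam Vstar V' ≤ Jaux B₁ B₂ A₁ A₂ WP WQ lam V V') :=
  Jaux_global_min_general n k B₁ B₂ A₁ A₂ hA₁ hA₂ WP WQ hWP hWQ lam V' hV' Δ₁ Δ₂ hΔ₁def hΔ₂def hΔ₁
    hΔ₂ Vstar hVstar

end
end

section
/- (Theorem 1, descent part.) With F as defined in the context, let V be an n×k matrix with strictly positive entries and assume that for every index pair (i,j) the quantities (Δ₁)_{ij} = (B₁⁺ + B₂⁺ + V(A₁⁻ + A₂⁻) + λ₂(W_P + W_Q)V)_{ij} and (Δ₂)_{ij} = (B₁⁻ + B₂⁻ + V(A₁⁺ + A₂⁺) + λ₂(D_P + D_Q)V)_{ij} are strictly positive. Define the multiplicative update V_new entrywise by (V_new)_{ij} = v_{ij} · sqrt( (Δ₁)_{ij} / (Δ₂)_{ij} ). Then F(V_new) ≤ F(V); i.e., the value of F is monotonically non-increasing under this update. -/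
/-!
After column-stacking with `Matrix.vec`, `F` becomes the objective
`-2 b⁺ ⬝ x + 2 b⁻ ⬝ x + x ⬝ K⁺ x - x ⬝ K⁻ x` of a quadratic program with nonnegative data:
`b^± = vec (B₁^± + B₂^±)` and the symmetric, entrywise nonnegative Kronecker sums
`K⁺ = (A₁⁺ + A₂⁺)ᵀ ⊕ λ (D_P + D_Q)` and `K⁻ = (A₁⁻ + A₂⁻)ᵀ ⊕ λ (W_P + W_Q)`, for which
`Δ₁ = b⁺ + K⁻ v` and `Δ₂ = b⁻ + K⁺ v`.

Around the current point `v > 0` each term is majorized by a separable function of the new point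
`u`: the positive ones through `2 v (u - v) ≤ u² - v²` and the Lee–Seung bound
`u ⬝ K u ≤ ∑ₚ (K v)ₚ uₚ² / vₚ`, the negative ones through `log t ≤ t - 1`. This gives
`F(u) - F(v) ≤ ∑ₚ (Δ₂ₚ (uₚ² - vₚ²) / vₚ - 2 Δ₁ₚ vₚ log (uₚ / vₚ))`, and at
`u = v √(Δ₁ / Δ₂)` every summand is `≤ 0`, once more by `log t ≤ t - 1`.
-/

open Matrix BigOperators Real

noncomputable section

noncomputable section

lemma mul_log_div_le_sub {a b : ℝ} (ha : 0 < a) (hb : 0 < b) : b * log (a / b) ≤ a - b := by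
  have h := mul_le_mul_of_nonneg_left (log_le_sub_one_of_pos (div_pos ha hb)) hb.le
  rwa [mul_sub, mul_div_cancel₀ a hb.ne', mul_one] at h

lemma two_mul_sub_le_sq_sub_sq_div {a b : ℝ} (hb : 0 < b) : 2 * (a - b) ≤ (a ^ 2 - b ^ 2) / b := by
  rw [le_div_iff₀ hb]
  nlinarith [sq_nonneg (a - b)]

section QuadraticBounds

variable {ι : Type*} [Fintype ι] {K : Matrix ι ι ℝ} {u v : ι → ℝ}

lemma dotProduct_mulVec_le_sum_mulVec_mul_sq_div (hK : K.IsSymm) (hK₀ : ∀ p q, 0 ≤ K p q)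
    (hv : ∀ p, 0 < v p) :
    u ⬝ᵥ K *ᵥ u ≤ ∑ p, (K *ᵥ v) p * u p ^ 2 / v p := by
  set g : ι → ι → ℝ := fun p q => K p q * v q * u p ^ 2 / v p
  have hpair : ∀ p q, 2 * (u p * (K p q * u q)) ≤ g p q + g q p := by
    intro p q
    have hp := hv p; have hq := hv q
    have hsq : 0 ≤ (v q * u p - v p * u q) ^ 2 / (v p * v q) := by positivity
    have : g p q + g q p - 2 * (u p * (K p q * u q))
        = K p q * ((v q * u p - v p * u q) ^ 2 / (v p * v q)) := by
      simp only [g, hK.apply p q]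
      field_simp
      ring
    nlinarith [mul_nonneg (hK₀ p q) hsq]
  have hsum : ∑ p, (K *ᵥ v) p * u p ^ 2 / v p = ∑ p, ∑ q, g p q := by
    simp only [g, mulVec, dotProduct, Finset.sum_mul, Finset.sum_div]
  calc u ⬝ᵥ K *ᵥ u = (∑ p, ∑ q, 2 * (u p * (K p q * u q))) / 2 := by
        simp only [dotProduct, mulVec, ← Finset.mul_sum]
        ring
    _ ≤ (∑ p, ∑ q, (g p q + g q p)) / 2 := by gcongr with p _ q _; exact hpair p q
    _ = ∑ p, (K *ᵥ v) p * u p ^ 2 / v p := by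
        rw [hsum]
        simp only [Finset.sum_add_distrib]
        rw [Finset.sum_comm (f := fun p q => g q p)]
        ring

lemma dotProduct_mulVec_add_two_mul_sum_log_le (hK : K.IsSymm) (hK₀ : ∀ p q, 0 ≤ K p q)
    (hu : ∀ p, 0 < u p) (hv : ∀ p, 0 < v p) :
    v ⬝ᵥ K *ᵥ v + 2 * ∑ p, (K *ᵥ v) p * v p * log (u p / v p) ≤ u ⬝ᵥ K *ᵥ u := by
  set g : ι → ι → ℝ := fun p q => K p q * v p * v q * log (u p / v p)
  have hpair : ∀ p q, v p * (K p q * v q) + g p q + g q p ≤ u p * (K p q * u q) := by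
    intro p q
    have hp := hv p; have hq := hv q
    have hlog := mul_log_div_le_sub (mul_pos (hu p) (hu q)) (mul_pos hp hq)
    rw [mul_div_mul_comm, log_mul (div_pos (hu p) hp).ne' (div_pos (hu q) hq).ne'] at hlog
    have := mul_le_mul_of_nonneg_left hlog (hK₀ p q)
    simp only [g, hK.apply p q]
    linarith
  have hsum : ∑ p, (K *ᵥ v) p * v p * log (u p / v p) = ∑ p, ∑ q, g p q := by
    simp only [g, mulVec, dotProduct, Finset.sum_mul]
    refine Finset.sum_congr rfl fun p _ => Finset.sum_congr rfl fun q _ => ?_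
    rw [hK.apply q p]; ring
  calc v ⬝ᵥ K *ᵥ v + 2 * ∑ p, (K *ᵥ v) p * v p * log (u p / v p)
      = ∑ p, ∑ q, (v p * (K p q * v q) + g p q + g q p) := by
        have hquad : v ⬝ᵥ K *ᵥ v = ∑ p, ∑ q, v p * (K p q * v q) := by
          simp only [dotProduct, mulVec, Finset.mul_sum]
        rw [hquad, hsum]
        simp only [Finset.sum_add_distrib]
        rw [Finset.sum_comm (f := fun p q => g q p)]
        ring
    _ ≤ ∑ p, ∑ q, u p * (K p q * u q) := by gcongr with p _ q _; exact hpair p q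
    _ = u ⬝ᵥ K *ᵥ u := by simp only [dotProduct, mulVec, Finset.mul_sum]

end QuadraticBounds

section QuadraticObjective

variable {ι : Type*} [Fintype ι] (bp bn : ι → ℝ) (Kp Kn : Matrix ι ι ℝ)

def quadObjective (x : ι → ℝ) : ℝ :=
  -2 * (bp ⬝ᵥ x) + 2 * (bn ⬝ᵥ x) + x ⬝ᵥ Kp *ᵥ x - x ⬝ᵥ Kn *ᵥ x

variable {bp bn Kp Kn}

lemma quadObjective_sub_le (hbp : ∀ p, 0 ≤ bp p) (hbn : ∀ p, 0 ≤ bn p)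
    (hKp : Kp.IsSymm) (hKn : Kn.IsSymm) (hKp₀ : ∀ p q, 0 ≤ Kp p q) (hKn₀ : ∀ p q, 0 ≤ Kn p q)
    {u v : ι → ℝ} (hu : ∀ p, 0 < u p) (hv : ∀ p, 0 < v p) :
    quadObjective bp bn Kp Kn u - quadObjective bp bn Kp Kn v ≤
      ∑ p, ((bn + Kp *ᵥ v) p * (u p ^ 2 - v p ^ 2) / v p
        - 2 * (bp + Kn *ᵥ v) p * v p * log (u p / v p)) := by
  have hsplit : ∀ p, (bn + Kp *ᵥ v) p * (u p ^ 2 - v p ^ 2) / v p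
      - 2 * (bp + Kn *ᵥ v) p * v p * log (u p / v p)
      = bn p * (u p ^ 2 - v p ^ 2) / v p + ((Kp *ᵥ v) p * u p ^ 2 / v p - v p * (Kp *ᵥ v) p)
        - 2 * (bp p * v p * log (u p / v p)) - 2 * ((Kn *ᵥ v) p * v p * log (u p / v p)) := by
    intro p
    have := (hv p).ne'
    simp only [Pi.add_apply]
    field_simp
    ring
  have hlinPos : -(bp ⬝ᵥ u) + bp ⬝ᵥ v ≤ -∑ p, bp p * v p * log (u p / v p) := by
    simp only [dotProduct, ← Finset.sum_neg_distrib, ← Finset.sum_add_distrib]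
    gcongr with p
    nlinarith [mul_le_mul_of_nonneg_left (mul_log_div_le_sub (hu p) (hv p)) (hbp p)]
  have hlinNeg : 2 * (bn ⬝ᵥ u - bn ⬝ᵥ v) ≤ ∑ p, bn p * (u p ^ 2 - v p ^ 2) / v p := by
    simp only [dotProduct, ← Finset.sum_sub_distrib, Finset.mul_sum]
    gcongr with p
    have := mul_le_mul_of_nonneg_left (two_mul_sub_le_sq_sub_sq_div (a := u p) (hv p)) (hbn p)
    rw [mul_div_assoc]
    linarith
  have hquadPos := dotProduct_mulVec_le_sum_mulVec_mul_sq_div (u := u) hKp hKp₀ hv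
  have hquadNeg := dotProduct_mulVec_add_two_mul_sum_log_le hKn hKn₀ hu hv
  rw [Finset.sum_congr rfl fun p _ => hsplit p]
  simp only [Finset.sum_add_distrib, Finset.sum_sub_distrib, ← Finset.mul_sum]
  unfold quadObjective
  rw [← dotProduct]
  linarith

lemma mul_sq_sub_sq_div_sub_log_le_zero {v d₁ d₂ : ℝ} (hv : 0 < v) (h₁ : 0 < d₁) (h₂ : 0 < d₂) :
    d₂ * ((v * √(d₁ / d₂)) ^ 2 - v ^ 2) / v - 2 * d₁ * v * log (v * √(d₁ / d₂) / v) ≤ 0 := by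
  have hd : 0 ≤ d₁ / d₂ := (div_pos h₁ h₂).le
  have hquad : d₂ * ((v * √(d₁ / d₂)) ^ 2 - v ^ 2) / v = v * (d₁ - d₂) := by
    rw [mul_pow, sq_sqrt hd]
    field_simp
  have hlog : 2 * log (v * √(d₁ / d₂) / v) = -log (d₂ / d₁) := by
    rw [mul_div_cancel_left₀ _ hv.ne', log_sqrt hd, ← log_inv, inv_div]
    ring
  have := mul_le_mul_of_nonneg_left (mul_log_div_le_sub h₂ h₁) hv.le
  rw [hquad]
  linear_combination this - (d₁ * v) * hlog

theorem quadObjective_multiplicativeUpdate_le (hbp : ∀ p, 0 ≤ bp p) (hbn : ∀ p, 0 ≤ bn p)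
    (hKp : Kp.IsSymm) (hKn : Kn.IsSymm) (hKp₀ : ∀ p q, 0 ≤ Kp p q) (hKn₀ : ∀ p q, 0 ≤ Kn p q)
    {v : ι → ℝ} (hv : ∀ p, 0 < v p)
    (h₁ : ∀ p, 0 < (bp + Kn *ᵥ v) p) (h₂ : ∀ p, 0 < (bn + Kp *ᵥ v) p) :
    quadObjective bp bn Kp Kn (fun p => v p * √((bp + Kn *ᵥ v) p / (bn + Kp *ᵥ v) p))
      ≤ quadObjective bp bn Kp Kn v := by
  have hu : ∀ p, 0 < v p * √((bp + Kn *ᵥ v) p / (bn + Kp *ᵥ v) p) :=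
    fun p => mul_pos (hv p) (sqrt_pos.mpr (div_pos (h₁ p) (h₂ p)))
  have hmaj := quadObjective_sub_le hbp hbn hKp hKn hKp₀ hKn₀ hu hv
  have hdescent := Finset.sum_nonpos fun p (_ : p ∈ Finset.univ) =>
    mul_sq_sub_sq_div_sub_log_le_zero (hv p) (h₁ p) (h₂ p)
  linarith

end QuadraticObjective

namespace Matrix

open scoped Kronecker

variable {R m n : Type*} [CommSemiring R] [DecidableEq m] [DecidableEq n]

def kroneckerSum (A : Matrix m m R) (B : Matrix n n R) : Matrix (m × n) (m × n) R :=
  A ⊗ₖ 1 + 1 ⊗ₖ B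

lemma IsSymm.kroneckerSum {A : Matrix m m R} {B : Matrix n n R} (hA : A.IsSymm) (hB : B.IsSymm) :
    (kroneckerSum A B).IsSymm := by
  rw [IsSymm, Matrix.kroneckerSum, transpose_add, ← kroneckerMap_transpose,
    ← kroneckerMap_transpose, transpose_one, transpose_one, hA.eq, hB.eq]

lemma kroneckerSum_nonneg [PartialOrder R] [IsOrderedRing R] {A : Matrix m m R} {B : Matrix n n R}
    (hA : ∀ i j, 0 ≤ A i j) (hB : ∀ i j, 0 ≤ B i j) (p q : m × n) :
    0 ≤ kroneckerSum A B p q := by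
  rw [kroneckerSum, Matrix.add_apply, kroneckerMap_apply, kroneckerMap_apply]
  exact add_nonneg (mul_nonneg (hA _ _) (zero_le_one_elem _ _))
    (mul_nonneg (zero_le_one_elem _ _) (hB _ _))

variable [Fintype m] [Fintype n]

lemma kroneckerSum_mulVec_vec (A : Matrix m m R) (B : Matrix n n R) (X : Matrix n m R) :
    kroneckerSum A B *ᵥ vec X = vec (X * Aᵀ + B * X) := by
  rw [kroneckerSum, add_mulVec, kronecker_mulVec_vec, ← vec_mul_eq_mulVec, Matrix.one_mul, vec_add]

lemma vec_dotProduct_kroneckerSum_mulVec_vec (A : Matrix m m R) (B : Matrix n n R)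
    (X : Matrix n m R) :
    vec X ⬝ᵥ kroneckerSum Aᵀ B *ᵥ vec X = trace (X * A * Xᵀ) + trace (Xᵀ * B * X) := by
  rw [kroneckerSum_mulVec_vec, vec_dotProduct_vec, transpose_transpose, Matrix.mul_add,
    trace_add, trace_mul_comm Xᵀ (X * A), ← Matrix.mul_assoc]

end Matrix

lemma mpos_nonneg {α β : Type*} (M : Matrix α β ℝ) (i : α) (j : β) : 0 ≤ mpos M i j := by
  rw [mpos, of_apply]
  linarith [neg_abs_le (M i j)]

lemma mneg_nonneg {α β : Type*} (M : Matrix α β ℝ) (i : α) (j : β) : 0 ≤ mneg M i j := by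
  rw [mneg, of_apply]
  linarith [le_abs_self (M i j)]

lemma Matrix.IsSymm.mpos {α : Type*} {A : Matrix α α ℝ} (hA : A.IsSymm) : (mpos A).IsSymm :=
  IsSymm.ext fun i j => by rw [_root_.mpos, of_apply, of_apply, hA.apply]

lemma Matrix.IsSymm.mneg {α : Type*} {A : Matrix α α ℝ} (hA : A.IsSymm) : (mneg A).IsSymm :=
  IsSymm.ext fun i j => by rw [_root_.mneg, of_apply, of_apply, hA.apply]

lemma dmat_nonneg {n : ℕ} {W : Matrix (Fin n) (Fin n) ℝ} (hW : ∀ i j, 0 ≤ W i j) (i j : Fin n) :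
    0 ≤ dmat W i j := by
  rw [dmat, diagonal_apply]
  split_ifs
  exacts [Finset.sum_nonneg fun j _ => hW i j, le_rfl]

lemma Fobj_eq_quadObjective {n k : ℕ} (B₁ B₂ : Matrix (Fin n) (Fin k) ℝ)
    (A₁ A₂ : Matrix (Fin k) (Fin k) ℝ) (WP WQ : Matrix (Fin n) (Fin n) ℝ) (lam : ℝ)
    (X : Matrix (Fin n) (Fin k) ℝ) :
    Fobj B₁ B₂ A₁ A₂ WP WQ lam X =
      quadObjective (vec (mpos B₁ + mpos B₂)) (vec (mneg B₁ + mneg B₂))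
        (kroneckerSum (mpos A₁ + mpos A₂)ᵀ (lam • (dmat WP + dmat WQ)))
        (kroneckerSum (mneg A₁ + mneg A₂)ᵀ (lam • (WP + WQ))) (vec X) := by
  rw [quadObjective, vec_dotProduct_kroneckerSum_mulVec_vec,
    vec_dotProduct_kroneckerSum_mulVec_vec, dotProduct_comm _ (vec X),
    dotProduct_comm _ (vec X), vec_dotProduct_vec, vec_dotProduct_vec]
  simp only [Fobj, Matrix.mul_add, Matrix.add_mul, Matrix.mul_smul, Matrix.smul_mul, trace_add,
    trace_smul, smul_eq_mul]
  ring

/-- Theorem 1 (descent part): the multiplicative update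
(V_new)ᵢⱼ = vᵢⱼ √((Δ₁)ᵢⱼ/(Δ₂)ᵢⱼ) does not increase the objective F. -/
theorem multiplicative_update_descent (n k : ℕ)
    (B₁ B₂ : Matrix (Fin n) (Fin k) ℝ)
    (A₁ A₂ : Matrix (Fin k) (Fin k) ℝ) (hA₁ : A₁.IsSymm) (hA₂ : A₂.IsSymm)
    (WP WQ : Matrix (Fin n) (Fin n) ℝ) (hWP : WP.IsSymm) (hWQ : WQ.IsSymm)
    (hWPnn : ∀ i j, 0 ≤ WP i j) (hWQnn : ∀ i j, 0 ≤ WQ i j)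
    (lam : ℝ) (hlam : 0 ≤ lam)
    (V : Matrix (Fin n) (Fin k) ℝ) (hV : ∀ i j, 0 < V i j)
    (Δ₁ Δ₂ : Matrix (Fin n) (Fin k) ℝ)
    (hΔ₁def : Δ₁ = mpos B₁ + mpos B₂ + V * (mneg A₁ + mneg A₂)
        + lam • ((WP + WQ) * V))
    (hΔ₂def : Δ₂ = mneg B₁ + mneg B₂ + V * (mpos A₁ + mpos A₂)
        + lam • ((dmat WP + dmat WQ) * V))
    (hΔ₁ : ∀ i j, 0 < Δ₁ i j) (hΔ₂ : ∀ i j, 0 < Δ₂ i j)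
    (Vnew : Matrix (Fin n) (Fin k) ℝ)
    (hVnew : ∀ i j, Vnew i j = V i j * Real.sqrt (Δ₁ i j / Δ₂ i j)) :
    Fobj B₁ B₂ A₁ A₂ WP WQ lam Vnew ≤ Fobj B₁ B₂ A₁ A₂ WP WQ lam V := by
  set Kp := kroneckerSum (mpos A₁ + mpos A₂)ᵀ (lam • (dmat WP + dmat WQ))
  set Kn := kroneckerSum (mneg A₁ + mneg A₂)ᵀ (lam • (WP + WQ))
  have hvecΔ₁ : vec (mpos B₁ + mpos B₂) + Kn *ᵥ vec V = vec Δ₁ := by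
    rw [kroneckerSum_mulVec_vec, transpose_transpose, ← vec_add, hΔ₁def, smul_mul, ← add_assoc]
  have hvecΔ₂ : vec (mneg B₁ + mneg B₂) + Kp *ᵥ vec V = vec Δ₂ := by
    rw [kroneckerSum_mulVec_vec, transpose_transpose, ← vec_add, hΔ₂def, smul_mul, ← add_assoc]
  have hvecVnew : vec Vnew = fun p => vec V p *
      √((vec (mpos B₁ + mpos B₂) + Kn *ᵥ vec V) p / (vec (mneg B₁ + mneg B₂) + Kp *ᵥ vec V) p) := by
    rw [hvecΔ₁, hvecΔ₂]
    exact funext fun p => hVnew p.2 p.1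
  have hKp : Kp.IsSymm := (hA₁.mpos.add hA₂.mpos).transpose.kroneckerSum
    (((isSymm_diagonal _).add (isSymm_diagonal _)).smul lam)
  have hKn : Kn.IsSymm := (hA₁.mneg.add hA₂.mneg).transpose.kroneckerSum ((hWP.add hWQ).smul lam)
  have hKp₀ : ∀ p q, 0 ≤ Kp p q :=
    kroneckerSum_nonneg (fun i j => add_nonneg (mpos_nonneg A₁ j i) (mpos_nonneg A₂ j i))
      fun i j => mul_nonneg hlam (add_nonneg (dmat_nonneg hWPnn i j) (dmat_nonneg hWQnn i j))
  have hKn₀ : ∀ p q, 0 ≤ Kn p q :=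
    kroneckerSum_nonneg (fun i j => add_nonneg (mneg_nonneg A₁ j i) (mneg_nonneg A₂ j i))
      fun i j => mul_nonneg hlam (add_nonneg (hWPnn i j) (hWQnn i j))
  rw [Fobj_eq_quadObjective, Fobj_eq_quadObjective, hvecVnew]
  refine quadObjective_multiplicativeUpdate_le ?_ ?_ hKp hKn hKp₀ hKn₀ (fun p => hV p.2 p.1) ?_ ?_
  · exact fun p => add_nonneg (mpos_nonneg B₁ p.2 p.1) (mpos_nonneg B₂ p.2 p.1)
  · exact fun p => add_nonneg (mneg_nonneg B₁ p.2 p.1) (mneg_nonneg B₂ p.2 p.1)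
  · exact hvecΔ₁ ▸ fun p => hΔ₁ p.2 p.1
  · exact hvecΔ₂ ▸ fun p => hΔ₂ p.2 p.1

end
end
end
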